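/- arXiv:1110.5589 — 2 statements merged into one kernel-verified Lean document; each statement's English description precedes it below -/
import Mathlib

section
/- Let η, χ, k_c, t be as follows: η : ℂ → ℝ with η(ξ) = 1 for |ξ| ≤ 1, η(ξ) = 0 for |ξ| ≥ 2, 0 ≤ η ≤ 1, χ(k) = η(t^{1/4}(k - k_c)), t ≥ 1. Then for every σ ∈ (1,∞), the function k ↦ (1 - χ(k)) / (16|k - k_c|²) restricted to the disc |k - k_c| ≤ 2 belongs to L^σ(ℂ) with norm at most C_σ t^{1/2 - 1/(2σ)}. -/
/-!
For `‖k - k_c‖ < t^{-1/4}` the factor `1 - χ` vanishes, and elsewhere the integrand is at most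
`‖k - k_c‖⁻²`. So the function is dominated by a translate of `‖y‖ ^ (-2)` cut off to
`‖y‖ ≥ a := t^{-1/4}`. This cut-off power is homogeneous under dilations, so its `L^σ` norm on
`ℂ ≅ ℝ²` is `a ^ (2/σ - 2) = t ^ (1/2 - 1/(2σ))` times its norm at `a = 1`, which is finite
because `2σ > 2`, the real dimension of `ℂ`.
-/

open MeasureTheory Module Set

section NormRpowTail

variable {E : Type*} [NormedAddCommGroup E]

noncomputable def normRpowTail (s a : ℝ) : E → ℝ := {x | a ≤ ‖x‖}.indicator fun x => ‖x‖ ^ (-s)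

theorem normRpowTail_nonneg (s a : ℝ) (x : E) : 0 ≤ normRpowTail s a x :=
  indicator_nonneg (fun _ _ => Real.rpow_nonneg (norm_nonneg _) _) x

theorem measurable_normRpowTail [MeasurableSpace E] [BorelSpace E] (s a : ℝ) :
    Measurable (normRpowTail (E := E) s a) :=
  (by fun_prop : Measurable fun x : E => ‖x‖ ^ (-s)).indicator
    (measurableSet_le measurable_const measurable_norm)

variable [NormedSpace ℝ E]

theorem normRpowTail_eq_mul_comp_inv_smul (s : ℝ) {a : ℝ} (ha : 0 < a) :
    normRpowTail (E := E) s a = fun x => a ^ (-s) * normRpowTail s 1 (a⁻¹ • x) := by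
  ext x
  have hnorm : ‖a⁻¹ • x‖ = a⁻¹ * ‖x‖ := by
    rw [norm_smul, Real.norm_of_nonneg (inv_nonneg.2 ha.le)]
  have hmem : a ≤ ‖x‖ ↔ 1 ≤ ‖a⁻¹ • x‖ := by
    rw [hnorm, le_inv_mul_iff₀ ha, mul_one]
  by_cases hx : a ≤ ‖x‖
  · simp only [normRpowTail, indicator_of_mem (show x ∈ {x : E | a ≤ ‖x‖} from hx),
      indicator_of_mem (show a⁻¹ • x ∈ {x : E | 1 ≤ ‖x‖} from hmem.1 hx), hnorm]
    rw [Real.mul_rpow (inv_nonneg.2 ha.le) (norm_nonneg _), Real.inv_rpow ha.le, ← mul_assoc,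
      mul_inv_cancel₀ (Real.rpow_pos_of_pos ha _).ne', one_mul]
  · simp only [normRpowTail, indicator_of_notMem (show x ∉ {x : E | a ≤ ‖x‖} from hx),
      indicator_of_notMem (show a⁻¹ • x ∉ {x : E | 1 ≤ ‖x‖} from mt hmem.2 hx), mul_zero]

theorem norm_one_sub_cutoff_div_le_normRpowTail {η : E → ℝ}
    (hη1 : ∀ ξ : E, ‖ξ‖ ≤ 1 → η ξ = 1) (hηb : ∀ ξ : E, 0 ≤ η ξ ∧ η ξ ≤ 1) {l : ℝ} (hl : 0 < l)
    (y : E) : ‖(1 - η (l • y)) / (16 * ‖y‖ ^ 2)‖ ≤ normRpowTail 2 l⁻¹ y := by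
  by_cases hy : l⁻¹ ≤ ‖y‖
  · have hy₀ : 0 < ‖y‖ := (inv_pos.2 hl).trans_le hy
    have hnum : ‖1 - η (l • y)‖ ≤ 1 := by
      rw [Real.norm_eq_abs, abs_le]
      constructor <;> linarith [hηb (l • y)]
    rw [normRpowTail, indicator_of_mem (show y ∈ {x : E | l⁻¹ ≤ ‖x‖} from hy), norm_div,
      Real.norm_of_nonneg (by positivity : (0 : ℝ) ≤ 16 * ‖y‖ ^ 2)]
    calc ‖1 - η (l • y)‖ / (16 * ‖y‖ ^ 2) ≤ 1 / (16 * ‖y‖ ^ 2) := by gcongr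
      _ ≤ 1 / ‖y‖ ^ 2 := by gcongr; linarith [sq_nonneg ‖y‖]
      _ = ‖y‖ ^ (-2 : ℝ) := by rw [Real.rpow_neg hy₀.le, Real.rpow_two, one_div]
  · have hsmall : ‖l • y‖ ≤ 1 := by
      rw [norm_smul, Real.norm_of_nonneg hl.le]
      calc l * ‖y‖ ≤ l * l⁻¹ := by gcongr; exact (not_le.1 hy).le
        _ = 1 := mul_inv_cancel₀ hl.ne'
    rw [hη1 _ hsmall, sub_self, zero_div, norm_zero]
    exact normRpowTail_nonneg 2 l⁻¹ y

end NormRpowTail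

section Homogeneity

variable {E F : Type*} [NormedAddCommGroup E] [NormedSpace ℝ E] [FiniteDimensional ℝ E]
  [MeasurableSpace E] [BorelSpace E] {μ : Measure E} [μ.IsAddHaarMeasure]

theorem eLpNorm_comp_inv_smul_of_pos [NormedAddCommGroup F] {f : E → F}
    (hf : AEStronglyMeasurable f μ) {p : ENNReal} (hp : p ≠ ⊤) {R : ℝ} (hR : 0 < R) :
    eLpNorm (fun x => f (R⁻¹ • x)) p μ =
      ENNReal.ofReal (R ^ finrank ℝ E) ^ (1 / p).toReal * eLpNorm f p μ := by
  have hmap : μ.map (R⁻¹ • ·) = ENNReal.ofReal (R ^ finrank ℝ E) • μ := by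
    rw [Measure.map_addHaar_smul μ (inv_ne_zero hR.ne'), inv_pow, inv_inv,
      abs_of_pos (by positivity)]
  have hf' : AEStronglyMeasurable f (μ.map (R⁻¹ • ·)) := hmap ▸ hf.smul_measure _
  rw [← Function.comp_def, ← eLpNorm_map_measure hf' (measurable_const_smul _).aemeasurable, hmap,
    eLpNorm_smul_measure_of_ne_top hp, smul_eq_mul]

theorem eLpNorm_normRpowTail (s : ℝ) {a : ℝ} (ha : 0 < a) {p : ENNReal} (hp : p ≠ ⊤) :
    eLpNorm (normRpowTail (E := E) s a) p μ =
      ENNReal.ofReal (a ^ (finrank ℝ E / p.toReal - s)) * eLpNorm (normRpowTail s 1) p μ := by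
  have hscale : normRpowTail (E := E) s a = a ^ (-s) • fun x => normRpowTail s 1 (a⁻¹ • x) :=
    normRpowTail_eq_mul_comp_inv_smul s ha
  rw [hscale, eLpNorm_const_smul, eLpNorm_comp_inv_smul_of_pos
    (measurable_normRpowTail s 1).aestronglyMeasurable hp ha, ← mul_assoc,
    Real.enorm_eq_ofReal (Real.rpow_nonneg ha.le _),
    ENNReal.ofReal_rpow_of_nonneg (by positivity) (by positivity), ← ENNReal.ofReal_mul
    (by positivity), ← Real.rpow_natCast, ← Real.rpow_mul ha.le, ← Real.rpow_add ha,
    one_div, ENNReal.toReal_inv, ← div_eq_mul_inv, neg_add_eq_sub]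

theorem memLp_normRpowTail_one {s : ℝ} {p : ENNReal} (hp₀ : p ≠ 0) (hp : p ≠ ⊤)
    (hsp : (finrank ℝ E : ℝ) < s * p.toReal) : MemLp (normRpowTail (E := E) s 1) p μ := by
  have hp_pos : 0 < p.toReal := ENNReal.toReal_pos hp₀ hp
  have hs : 0 < s := pos_of_mul_pos_left ((Nat.cast_nonneg _).trans_lt hsp) hp_pos.le
  have hbracket : MemLp (fun x : E => (1 + ‖x‖) ^ (-s)) p μ := by
    refine (integrable_norm_rpow_iff
      (by fun_prop : Measurable fun x : E => (1 + ‖x‖) ^ (-s)).aestronglyMeasurable hp₀ hp).1 ?_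
    refine (integrable_one_add_norm (μ := μ) hsp).congr (Filter.Eventually.of_forall fun x => ?_)
    have hx : (0 : ℝ) ≤ 1 + ‖x‖ := by positivity
    dsimp only
    rw [Real.norm_of_nonneg (Real.rpow_nonneg hx _), ← Real.rpow_mul hx, neg_mul]
  refine (hbracket.const_mul (2 ^ s)).mono (measurable_normRpowTail s 1).aestronglyMeasurable
    (Filter.Eventually.of_forall fun x => ?_)
  rw [Real.norm_of_nonneg (normRpowTail_nonneg s 1 x), Real.norm_of_nonneg (by positivity)]
  by_cases hx : 1 ≤ ‖x‖
  · rw [normRpowTail, indicator_of_mem (show x ∈ {x : E | 1 ≤ ‖x‖} from hx)]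
    calc ‖x‖ ^ (-s) = 2 ^ s * (2 * ‖x‖) ^ (-s) := by
          rw [Real.mul_rpow zero_le_two (norm_nonneg _), ← mul_assoc, ← Real.rpow_add two_pos,
            add_neg_cancel, Real.rpow_zero, one_mul]
      _ ≤ 2 ^ s * (1 + ‖x‖) ^ (-s) := by
          refine mul_le_mul_of_nonneg_left ?_ (by positivity)
          exact Real.rpow_le_rpow_of_nonpos (by positivity) (by linarith) (by linarith)
  · rw [normRpowTail, indicator_of_notMem (show x ∉ {x : E | 1 ≤ ‖x‖} from hx)]
    positivity

theorem exists_eLpNorm_normRpowTail_le {s : ℝ} {p : ENNReal} (hp₀ : p ≠ 0) (hp : p ≠ ⊤)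
    (hsp : (finrank ℝ E : ℝ) < s * p.toReal) :
    ∃ C > 0, ∀ a > 0, eLpNorm (normRpowTail (E := E) s a) p μ ≤
      ENNReal.ofReal (C * a ^ (finrank ℝ E / p.toReal - s)) := by
  set N := eLpNorm (normRpowTail (E := E) s 1) p μ
  have hN : N ≠ ⊤ := (memLp_normRpowTail_one hp₀ hp hsp).eLpNorm_lt_top.ne
  refine ⟨N.toReal + 1, by positivity, fun a ha => ?_⟩
  rw [eLpNorm_normRpowTail s ha hp, mul_comm (N.toReal + 1),
    ENNReal.ofReal_mul (Real.rpow_nonneg ha.le _)]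
  gcongr
  rw [ENNReal.le_ofReal_iff_toReal_le hN (by positivity)]
  linarith

end Homogeneity

/-- With `χ(k) = η(t^{1/4}(k-k_c))` as usual and `t ≥ 1`, for every `σ ∈ (1,∞)` the
function `k ↦ (1 - χ(k))/(16|k - k_c|²)` restricted to the disc `|k - k_c| ≤ 2`
lies in `L^σ(ℂ)` with norm at most `C_σ t^{1/2 - 1/(2σ)}`. -/
theorem stmt4 (σ : ℝ) (hσ : 1 < σ) :
    ∃ C : ℝ, 0 < C ∧ ∀ (η : ℂ → ℝ), Measurable η →
      (∀ ξ : ℂ, ‖ξ‖ ≤ 1 → η ξ = 1) → (∀ ξ : ℂ, 2 ≤ ‖ξ‖ → η ξ = 0) →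
      (∀ ξ : ℂ, 0 ≤ η ξ ∧ η ξ ≤ 1) →
      ∀ (kc : ℂ) (t : ℝ), 1 ≤ t →
        eLpNorm
            (Set.indicator {k : ℂ | ‖k - kc‖ ≤ 2}
              (fun k : ℂ =>
                (1 - η ((t ^ ((1 : ℝ) / 4)) • (k - kc))) / (16 * ‖k - kc‖ ^ 2)))
            (ENNReal.ofReal σ) volume
          ≤ ENNReal.ofReal (C * t ^ (1 / 2 - 1 / (2 * σ))) := by
  have hσp : ((finrank ℝ ℂ : ℕ) : ℝ) < 2 * (ENNReal.ofReal σ).toReal := by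
    rw [Complex.finrank_real_complex, ENNReal.toReal_ofReal (by linarith)]
    push_cast
    linarith
  obtain ⟨C, hC, hbound⟩ := exists_eLpNorm_normRpowTail_le (μ := volume)
    (ENNReal.ofReal_pos.2 (by linarith)).ne' ENNReal.ofReal_ne_top hσp
  refine ⟨C, hC, fun η _ hη1 _ hηb kc t ht => ?_⟩
  have hl : 0 < t ^ ((1 : ℝ) / 4) := Real.rpow_pos_of_pos (by linarith) _
  have hpt : ∀ k : ℂ, ‖({k : ℂ | ‖k - kc‖ ≤ 2}.indicator fun k : ℂ =>
      (1 - η ((t ^ ((1 : ℝ) / 4)) • (k - kc))) / (16 * ‖k - kc‖ ^ 2)) k‖ ≤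
      ‖normRpowTail 2 (t ^ ((1 : ℝ) / 4))⁻¹ (k - kc)‖ := fun k =>
    (norm_indicator_le_norm_self _ _).trans <|
      (norm_one_sub_cutoff_div_le_normRpowTail hη1 hηb hl _).trans (Real.le_norm_self _)
  calc _ ≤ eLpNorm (fun k => normRpowTail 2 (t ^ ((1 : ℝ) / 4))⁻¹ (k - kc)) _ volume :=
        eLpNorm_mono hpt
    _ = eLpNorm (normRpowTail 2 (t ^ ((1 : ℝ) / 4))⁻¹) _ volume :=
        eLpNorm_comp_measurePreserving (measurable_normRpowTail _ _).aestronglyMeasurable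
          (measurePreserving_sub_right volume kc)
    _ ≤ _ := hbound _ (inv_pos.2 hl)
    _ = ENNReal.ofReal (C * t ^ (1 / 2 - 1 / (2 * σ))) := by
        rw [Complex.finrank_real_complex, ENNReal.toReal_ofReal (by linarith), Real.inv_rpow hl.le,
          ← Real.rpow_mul (by linarith), ← Real.rpow_neg (by linarith)]
        congr 3
        field_simp
        ring
end

section
/- In ℂ^{2n+1} with complex coordinates z₀,…,z_{2n}, define linear functionals ℓ_j : ℂ^{2n+1} → ℂ for 0 ≤ j ≤ 4n+1 by ℓ_j(z) = z_j for 0 ≤ j ≤ 2n, ℓ_j(z) = z_{j-2n} - z_{j-2n-1} for 2n < j ≤ 4n, and ℓ_{4n+1}(z) = Σ_{i=0}^{2n} (-1)^i z_i. Then with all exponents p_j = 2: (a) Σ_{j=0}^{4n+1} (1/2)·dim_ℂ ℓ_j(ℂ^{2n+1}) = 2n+1, and (b) for every complex subspace V of ℂ^{2n+1} with 0 < dim_ℂ V < 2n+1, one has Σ_{j=0}^{4n+1} (1/2)·dim_ℂ ℓ_j(V) > dim_ℂ V. -/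
/-!
Every `ℓ_j` is a nonzero functional, so (a) is a count. For (b), split the `ℓ_j` into the
coordinates and the family formed by the differences `z_{k+1} - z_k` and the alternating sum.
Each family separates points, so `V` embeds into the product of the images `ℓ_j(V)` over either
family, and each family has at least `dim V` members not vanishing on `V`. If the coordinates give
exactly `dim V`, then `V` is the coordinate subspace spanned by the `e_s` it does not kill. Then
the alternating sum does not vanish on `V`, and since `dim V < 2n+1` some coordinate vanishes on
`V`, so the differences alone already separate `V`: this is the one extra functional.
-/

open Module Finset

theorem Fin.sum_univ_four_mul_add_two {β : Type*} [AddCommMonoid β] (n : ℕ)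
    (g : Fin (4 * n + 2) → β) :
    ∑ j, g j = ∑ k : Fin (2 * n + 1), g ⟨k, by omega⟩
      + ∑ k : Fin (2 * n), g ⟨2 * n + 1 + k, by omega⟩ + g (Fin.last _) := by
  rw [← (finCongr (by omega : 2 * n + 1 + 2 * n + 1 = 4 * n + 2)).sum_comp, Fin.sum_univ_castSucc,
    Fin.sum_univ_add]
  exact congrArg _ (congrArg g (Fin.ext (by simp)))

section SeparatingFamily

variable {K M : Type*} [Field K] [AddCommGroup M] [Module K M]

theorem finrank_map_eq_zero_iff_le_ker (f : M →ₗ[K] K) (V : Submodule K M) :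
    finrank K (V.map f) = 0 ↔ V ≤ LinearMap.ker f := by
  rw [Submodule.finrank_eq_zero, LinearMap.le_ker_iff_map]

theorem finrank_map_eq_one_of_not_le_ker {f : M →ₗ[K] K} {V : Submodule K M}
    (h : ¬ V ≤ LinearMap.ker f) : finrank K (V.map f) = 1 := by
  rw [← finrank_map_eq_zero_iff_le_ker] at h
  have := (finrank_self K).symm ▸ Submodule.finrank_le (V.map f)
  omega

theorem finrank_range_eq_one_of_ne_zero {f : M →ₗ[K] K} (hf : f ≠ 0) :
    finrank K (LinearMap.range f) = 1 := by
  rw [Module.Dual.range_eq_top_of_ne_zero hf, finrank_top, finrank_self]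

theorem finrank_le_sum_finrank_map {ι : Type*} [Fintype ι] {N : ι → Type*}
    [∀ k, AddCommGroup (N k)] [∀ k, Module K (N k)] [∀ k, FiniteDimensional K (N k)]
    (c : ∀ k, M →ₗ[K] N k) (V : Submodule K M)
    (hc : ∀ v ∈ V, (∀ k, c k v = 0) → v = 0) :
    finrank K V ≤ ∑ k, finrank K (V.map (c k)) := by
  have hinj : Function.Injective (LinearMap.pi fun k => (c k).submoduleMap V) := by
    rw [← LinearMap.ker_eq_bot, LinearMap.ker_eq_bot']
    intro v hv
    exact Subtype.ext (hc v v.2 fun k => congrArg Subtype.val (congrFun hv k))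
  simpa [Module.finrank_pi_fintype] using LinearMap.finrank_le_finrank_of_injective hinj

theorem eq_iInf_ker_of_sum_finrank_map_le [FiniteDimensional K M] {ι : Type*} [Fintype ι]
    (c : ι → M →ₗ[K] K) (hc : ∀ v, (∀ k, c k v = 0) → v = 0) (V : Submodule K M)
    (hV : ∑ k, finrank K (V.map (c k)) ≤ finrank K V) :
    V = ⨅ (k) (_ : V ≤ LinearMap.ker (c k)), LinearMap.ker (c k) := by
  set P := ⨅ (k) (_ : V ≤ LinearMap.ker (c k)), LinearMap.ker (c k)
  have hVP : V ≤ P := le_iInf₂ fun _ h => h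
  have hmap (k) : finrank K (P.map (c k)) ≤ finrank K (V.map (c k)) := by
    by_cases hk : V ≤ LinearMap.ker (c k)
    · rw [(finrank_map_eq_zero_iff_le_ker _ P).2 (iInf₂_le k hk)]
      exact Nat.zero_le _
    · rw [finrank_map_eq_one_of_not_le_ker hk, ← finrank_self K]
      exact Submodule.finrank_le _
  refine Submodule.eq_of_le_of_finrank_le hVP ?_
  calc finrank K P ≤ ∑ k, finrank K (P.map (c k)) :=
        finrank_le_sum_finrank_map c P fun v _ => hc v
    _ ≤ ∑ k, finrank K (V.map (c k)) := sum_le_sum fun k _ => hmap k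
    _ ≤ finrank K V := hV

end SeparatingFamily

section CoordinateFunctionals

variable {K : Type*} [Field K]

def coordDiff {m : ℕ} (k : Fin m) : (Fin (m + 1) → K) →ₗ[K] K :=
  LinearMap.proj (R := K) (φ := fun _ => K) k.succ - LinearMap.proj k.castSucc

def altSum {m : ℕ} : (Fin m → K) →ₗ[K] K :=
  ∑ i : Fin m, (-1 : K) ^ (i : ℕ) • LinearMap.proj (R := K) (φ := fun _ => K) i

@[simp]
theorem coordDiff_apply {m : ℕ} (k : Fin m) (v : Fin (m + 1) → K) :
    coordDiff k v = v k.succ - v k.castSucc := rfl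

@[simp]
theorem altSum_apply {m : ℕ} (v : Fin m → K) :
    altSum v = ∑ i : Fin m, (-1 : K) ^ (i : ℕ) * v i := by
  simp [altSum]

theorem altSum_single {m : ℕ} (s : Fin m) : altSum (Pi.single s (1 : K)) = (-1) ^ (s : ℕ) := by
  simp [Pi.single_apply]

theorem LinearMap.proj_ne_zero {m : ℕ} (k : Fin m) :
    LinearMap.proj (R := K) (φ := fun _ => K) k ≠ 0 := fun h => by
  simpa using LinearMap.congr_fun h (Pi.single k 1)

theorem coordDiff_ne_zero {m : ℕ} (k : Fin m) : coordDiff (K := K) k ≠ 0 := fun h => by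
  simpa [Pi.single_eq_of_ne Fin.castSucc_lt_succ.ne] using
    LinearMap.congr_fun h (Pi.single k.succ 1)

theorem altSum_ne_zero {m : ℕ} [NeZero m] : altSum (K := K) (m := m) ≠ 0 := fun h => by
  have := LinearMap.congr_fun h (Pi.single 0 1)
  rw [altSum_single, LinearMap.zero_apply] at this
  simp at this

theorem apply_eq_apply_zero_of_coordDiff_eq_zero {m : ℕ} {v : Fin (m + 1) → K}
    (h : ∀ k, coordDiff k v = 0) (i : Fin (m + 1)) : v i = v 0 := by
  induction i using Fin.induction with
  | zero => rfl
  | succ k ih => rw [← ih, ← sub_eq_zero, ← coordDiff_apply, h]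

theorem eq_zero_of_coordDiff_eq_zero_of_apply_eq_zero {m : ℕ} {v : Fin (m + 1) → K}
    (h : ∀ k, coordDiff k v = 0) {t : Fin (m + 1)} (ht : v t = 0) : v = 0 := by
  funext i
  rw [Pi.zero_apply, apply_eq_apply_zero_of_coordDiff_eq_zero h, ← ht,
    apply_eq_apply_zero_of_coordDiff_eq_zero h t]

theorem eq_zero_of_coordDiff_eq_zero_of_altSum_eq_zero {n : ℕ} {v : Fin (2 * n + 1) → K}
    (h : ∀ k, coordDiff k v = 0) (hσ : altSum v = 0) : v = 0 := by
  have hconst := apply_eq_apply_zero_of_coordDiff_eq_zero h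
  have hsum : altSum v = v 0 := by
    simp only [altSum_apply, hconst, ← Finset.sum_mul, Fin.sum_neg_one_pow]
    simp
  exact eq_zero_of_coordDiff_eq_zero_of_apply_eq_zero h (hsum ▸ hσ)

end CoordinateFunctionals

theorem two_mul_finrank_lt_sum_finrank_map {K : Type*} [Field K] {n : ℕ}
    (V : Submodule K (Fin (2 * n + 1) → K)) (hV₀ : 0 < finrank K V)
    (hV : finrank K V < 2 * n + 1) :
    2 * finrank K V < ∑ k, finrank K (V.map (LinearMap.proj (φ := fun _ => K) k))
      + ∑ k : Fin (2 * n), finrank K (V.map (coordDiff k)) + finrank K (V.map altSum) := by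
  set d := finrank K V
  have hproj : ∀ v : Fin (2 * n + 1) → K,
      (∀ k, LinearMap.proj (R := K) (φ := fun _ => K) k v = 0) → v = 0 := fun v h => funext h
  have hA := finrank_le_sum_finrank_map _ V fun v _ => hproj v
  have hB :
      d ≤ ∑ k : Fin (2 * n), finrank K (V.map (coordDiff k)) + finrank K (V.map altSum) := by
    let c : Option (Fin (2 * n)) → (Fin (2 * n + 1) → K) →ₗ[K] K :=
      fun o => o.elim altSum coordDiff
    have := finrank_le_sum_finrank_map c V
      fun v _ h => eq_zero_of_coordDiff_eq_zero_of_altSum_eq_zero (fun k => h (some k)) (h none)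
    rw [Fintype.sum_option] at this
    exact this.trans_eq (add_comm _ _)
  by_cases hcoord : d < ∑ k, finrank K (V.map (LinearMap.proj (φ := fun _ => K) k))
  · omega
  -- exactly `d` coordinates survive on `V`, so `V` is the coordinate subspace they span
  have hVeq := eq_iInf_ker_of_sum_finrank_map_le _ hproj V (not_lt.1 hcoord)
  obtain ⟨t, ht⟩ : ∃ t, V ≤ LinearMap.ker (LinearMap.proj (φ := fun _ => K) t) := by
    by_contra! h
    simp only [finrank_map_eq_one_of_not_le_ker (h _), sum_const, card_univ, Fintype.card_fin,
      smul_eq_mul, mul_one] at hcoord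
    omega
  obtain ⟨s, hs⟩ : ∃ s, ¬ V ≤ LinearMap.ker (LinearMap.proj (φ := fun _ => K) s) := by
    by_contra! h
    simp only [(finrank_map_eq_zero_iff_le_ker _ V).2 (h _), sum_const_zero] at hA
    omega
  have hsingle : Pi.single s (1 : K) ∈ V := by
    rw [hVeq]
    simp only [Submodule.mem_iInf, LinearMap.mem_ker, LinearMap.coe_proj, Function.eval]
    intro k hk
    exact Pi.single_eq_of_ne (by rintro rfl; exact hs hk) 1
  have hσ : finrank K (V.map altSum) = 1 := by
    refine finrank_map_eq_one_of_not_le_ker fun h => ?_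
    have := h hsingle
    rw [LinearMap.mem_ker, altSum_single] at this
    exact pow_ne_zero _ (neg_ne_zero.2 one_ne_zero) this
  have hD : d ≤ ∑ k : Fin (2 * n), finrank K (V.map (coordDiff k)) :=
    finrank_le_sum_finrank_map _ V fun v hv h =>
      eq_zero_of_coordDiff_eq_zero_of_apply_eq_zero h (ht hv)
  omega

/-- Criticality/subcriticality (Bennett–Carbery–Christ–Tao) for the linear data of
Brown's multilinear form: with `ℓ_j(z) = z_j` (`0 ≤ j ≤ 2n`), `ℓ_j(z) = z_{j-2n} - z_{j-2n-1}`
(`2n < j ≤ 4n`), `ℓ_{4n+1}(z) = Σ (-1)^i z_i`, and all exponents `p_j = 2`: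
(a) `Σ_j (1/2) dim ℓ_j(ℂ^{2n+1}) = 2n+1`, and (b) every nonzero proper complex
subspace `V` of `ℂ^{2n+1}` satisfies `dim V < Σ_j (1/2) dim ℓ_j(V)`. -/
theorem stmt10 (n : ℕ)
    (l : Fin (4 * n + 2) → ((Fin (2 * n + 1) → ℂ) →ₗ[ℂ] ℂ))
    (h1 : ∀ (j : ℕ) (hj : j ≤ 2 * n) (z : Fin (2 * n + 1) → ℂ),
      l ⟨j, by omega⟩ z = z ⟨j, by omega⟩)
    (h2 : ∀ (j : ℕ) (hj1 : 2 * n < j) (hj2 : j ≤ 4 * n) (z : Fin (2 * n + 1) → ℂ),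
      l ⟨j, by omega⟩ z = z ⟨j - 2 * n, by omega⟩ - z ⟨j - 2 * n - 1, by omega⟩)
    (h3 : ∀ z : Fin (2 * n + 1) → ℂ,
      l ⟨4 * n + 1, by omega⟩ z = ∑ i : Fin (2 * n + 1), (-1 : ℂ) ^ (i : ℕ) * z i) :
    (∑ j : Fin (4 * n + 2),
        (Module.finrank ℂ (LinearMap.range (l j)) : ℚ) / 2 = 2 * n + 1) ∧
    (∀ V : Submodule ℂ (Fin (2 * n + 1) → ℂ),
      0 < Module.finrank ℂ V → Module.finrank ℂ V < 2 * n + 1 →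
      (Module.finrank ℂ V : ℚ)
        < ∑ j : Fin (4 * n + 2), (Module.finrank ℂ (Submodule.map (l j) V) : ℚ) / 2) := by
  have hA (k : Fin (2 * n + 1)) : l ⟨k, by omega⟩ = LinearMap.proj k :=
    LinearMap.ext fun z => h1 k (by omega) z
  have hD (k : Fin (2 * n)) : l ⟨2 * n + 1 + k, by omega⟩ = coordDiff k := by
    refine LinearMap.ext fun z => ?_
    rw [h2 _ (by omega) (by omega), coordDiff_apply]
    congr 2 <;> ext <;> simp <;> omega
  have hσ : l (Fin.last _) = altSum :=
    LinearMap.ext fun z => (h3 z).trans (altSum_apply z).symm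
  have hsum {β : Type} [AddCommMonoid β] (g : ((Fin (2 * n + 1) → ℂ) →ₗ[ℂ] ℂ) → β) :
      ∑ j, g (l j)
        = ∑ k, g (LinearMap.proj k) + ∑ k : Fin (2 * n), g (coordDiff k) + g altSum := by
    rw [Fin.sum_univ_four_mul_add_two, hσ]
    simp only [hA, hD]
  constructor
  · rw [hsum fun f => (finrank ℂ (LinearMap.range f) : ℚ) / 2]
    simp only [finrank_range_eq_one_of_ne_zero (LinearMap.proj_ne_zero (K := ℂ) _),
      finrank_range_eq_one_of_ne_zero (coordDiff_ne_zero (K := ℂ) _),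
      finrank_range_eq_one_of_ne_zero (altSum_ne_zero (K := ℂ)), sum_const, card_univ,
      Fintype.card_fin, nsmul_eq_mul]
    push_cast
    ring
  · intro V hV₀ hV
    rw [← Finset.sum_div, lt_div_iff₀ two_pos, ← Nat.cast_sum, hsum fun f => finrank ℂ (V.map f),
      mul_comm]
    exact_mod_cast two_mul_finrank_lt_sum_finrank_map V hV₀ hV
end
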